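/- arXiv:2401.01681 — 4 statements merged into one kernel-verified Lean document; each statement's English description precedes it below -/
import Mathlib

section
/- Let x be the characteristic vector of a vertex of the Schrijver graph S(n,k), and let r be the number of distinct cyclic shifts of x. Then the sequence (x, σ(x), σ²(x), ..., σ^{r−1}(x)) is a cycle in S(n,k): consecutive strings are adjacent, σ^{r−1}(x) is adjacent to x, and all r strings are pairwise distinct. -/
/-- Cyclic right shift of a bitstring of length `n` by one position: `σ(x)_i = x_{i-1}`. -/
def shift {n : ℕ} (x : ZMod n → Bool) : ZMod n → Bool := fun i => x (i - 1)

/-- Cyclic left shift, i.e. `σ⁻¹`: `σ⁻¹(x)_i = x_{i+1}`. -/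
def unshift {n : ℕ} (x : ZMod n → Bool) : ZMod n → Bool := fun i => x (i + 1)

/-- A vertex of the Schrijver graph `S(n,k)` in bitstring form: a binary string of length `n`
with exactly `k` ones and no two ones cyclically adjacent. -/
def IsSchrijverVertex (n k : ℕ) (x : ZMod n → Bool) : Prop :=
  Set.ncard {i : ZMod n | x i = true} = k ∧ ∀ i : ZMod n, x i = true → x (i + 1) = false

/-- Adjacency in the (Schrijver/Kneser) graph: the sets of 1-positions are disjoint
(and the strings are distinct). -/
def SAdj {n : ℕ} (x y : ZMod n → Bool) : Prop :=
  x ≠ y ∧ ∀ i : ZMod n, ¬(x i = true ∧ y i = true)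

/-- The necklace of `x`: the set of all cyclic shifts of `x`. -/
def neck {n : ℕ} (x : ZMod n → Bool) : Set (ZMod n → Bool) :=
  {y | ∃ i : ℕ, shift^[i] x = y}

/-!
Since no two ones of `x` are cyclically adjacent, `x` and `σ x` have disjoint supports; the same
holds for every shift of `x`, and `σ^[r] x = x`, so consecutive members of the sequence, as well
as `σ^[r-1] x` and `x`, are adjacent. The number `r` of distinct shifts is the minimal period of
`x` under `σ`, so the first `r` shifts are pairwise distinct. Finally `r ≥ 3`: if `σ² x = x`,
every position or its successor carries a one, so the support `S` of `x` and its translate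
`S - 1` partition `ZMod n`, forcing `n = 2k`.
-/

open Function

namespace Function

theorem ncard_range_iterate {α : Type*} {f : α → α} {x : α} (hx : x ∈ periodicPts f) :
    (Set.range (f^[·] x)).ncard = minimalPeriod f x := by
  have hrange : Set.range (f^[·] x) = (f^[·] x) '' Set.Iio (minimalPeriod f x) := by
    refine (Set.image_subset_range _ _).antisymm' ?_
    rintro _ ⟨m, rfl⟩
    exact ⟨m % minimalPeriod f x, Nat.mod_lt _ (minimalPeriod_pos_of_mem_periodicPts hx),
      iterate_mod_minimalPeriod_eq⟩
  rw [hrange, iterate_injOn_Iio_minimalPeriod.ncard_image, Set.ncard_Iio_nat]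

end Function

variable {n : ℕ} {x : ZMod n → Bool}

def NoAdjacentOnes (x : ZMod n → Bool) : Prop :=
  ∀ i, x i = true → x (i + 1) = false

theorem shift_iterate_apply (x : ZMod n → Bool) (m : ℕ) (j : ZMod n) :
    shift^[m] x j = x (j - m) := by
  induction m generalizing j with
  | zero => simp
  | succ m ih =>
    rw [iterate_succ_apply', shift, ih, Nat.cast_succ, sub_sub, add_comm]

theorem shift_iterate_self (x : ZMod n → Bool) : shift^[n] x = x := by
  funext j
  simp [shift_iterate_apply]

theorem mem_periodicPts_shift [NeZero n] (x : ZMod n → Bool) : x ∈ periodicPts shift :=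
  ⟨n, NeZero.pos n, shift_iterate_self x⟩

theorem ncard_neck [NeZero n] (x : ZMod n → Bool) : (neck x).ncard = minimalPeriod shift x :=
  ncard_range_iterate (mem_periodicPts_shift x)

namespace NoAdjacentOnes

theorem shift (hx : NoAdjacentOnes x) : NoAdjacentOnes (shift x) := fun i => by
  simpa [_root_.shift] using hx (i - 1)

theorem iterate (hx : NoAdjacentOnes x) (m : ℕ) : NoAdjacentOnes (_root_.shift^[m] x) := by
  induction m with
  | zero => exact hx
  | succ m ih => rw [iterate_succ_apply']; exact ih.shift

theorem not_and_shift (hx : NoAdjacentOnes x) (i : ZMod n) :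
    ¬(x i = true ∧ _root_.shift x i = true) := fun ⟨hi, hi'⟩ => by
  simpa [hi] using hx (i - 1) hi'

theorem sAdj_shift (hx : NoAdjacentOnes x) (hne : x ≠ _root_.shift x) :
    SAdj x (_root_.shift x) :=
  ⟨hne, hx.not_and_shift⟩

theorem two_mul_ncard_eq [NeZero n] (hx : NoAdjacentOnes x)
    (hcover : ∀ j, x j = true ∨ x (j + 1) = true) : 2 * {i | x i = true}.ncard = n := by
  set S := {i | x i = true}
  have hpreimage : ((· + 1) ⁻¹' S).ncard = S.ncard :=
    Set.ncard_preimage_of_injective_subset_range (add_left_injective 1)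
      fun j _ => ⟨j - 1, sub_add_cancel j 1⟩
  have hdisj : Disjoint S ((· + 1) ⁻¹' S) :=
    Set.disjoint_left.2 fun i hi hi' => by simp_all [S, hx i hi]
  have hunion : S ∪ (· + 1) ⁻¹' S = Set.univ := Set.eq_univ_of_forall hcover
  have huniv := Set.ncard_univ (ZMod n)
  rw [Nat.card_zmod, ← hunion, Set.ncard_union_eq hdisj, hpreimage] at huniv
  omega

end NoAdjacentOnes

theorem forall_or_of_isPeriodicPt_two [NeZero n] (h2 : IsPeriodicPt shift 2 x) {i : ZMod n}
    (hi : x i = true) (j : ZMod n) : x j = true ∨ x (j + 1) = true := by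
  have hstep : ∀ j : ZMod n, x (j + 2) = x j := fun j => by
    simpa [shift_iterate_apply] using (congrFun h2 (j + 2)).symm
  have hfrom : ∀ m : ℕ, x (i + m) = true ∨ x (i + m + 1) = true := by
    intro m
    induction m with
    | zero => simp [hi]
    | succ m ih =>
      rw [Nat.cast_succ, ← add_assoc, add_assoc _ 1 1, one_add_one_eq_two, hstep]
      exact ih.symm
  obtain ⟨m, hm⟩ := ZMod.natCast_zmod_surjective (j - i)
  simpa [hm] using hfrom m

theorem three_le_minimalPeriod_shift {k : ℕ} (hk : 1 ≤ k) (hn : 2 * k + 1 ≤ n)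
    (hx : IsSchrijverVertex n k x) : 3 ≤ minimalPeriod shift x := by
  have : NeZero n := ⟨by omega⟩
  have hpos := minimalPeriod_pos_of_mem_periodicPts (mem_periodicPts_shift x)
  by_contra! hlt
  have h2 : IsPeriodicPt shift 2 x :=
    (isPeriodicPt_minimalPeriod shift x).trans_dvd <| by
      interval_cases minimalPeriod shift x <;> norm_num
  obtain ⟨i, hi⟩ : {i | x i = true}.Nonempty :=
    Set.nonempty_of_ncard_ne_zero (by rw [hx.1]; omega)
  have := NoAdjacentOnes.two_mul_ncard_eq hx.2 (forall_or_of_isPeriodicPt_two h2 hi)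
  rw [hx.1] at this
  omega

/-- for a Schrijver vertex `x` with `r` distinct cyclic shifts, the sequence
`(x, σ(x), …, σ^{r-1}(x))` is a cycle in `S(n,k)`: consecutive strings are adjacent,
the last one is adjacent to the first, all `r` strings are pairwise distinct, and `r ≥ 3`. -/
theorem schrijver_shift_cycle (n k : ℕ) (hk : 1 ≤ k) (hn : 2 * k + 1 ≤ n)
    (x : ZMod n → Bool) (hx : IsSchrijverVertex n k x) (r : ℕ) (hr : r = (neck x).ncard) :
    3 ≤ r ∧
    (∀ i : ℕ, i + 1 < r → SAdj (shift^[i] x) (shift^[i + 1] x)) ∧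
    SAdj (shift^[r - 1] x) x ∧
    (∀ i j : ℕ, i < r → j < r → i ≠ j → shift^[i] x ≠ shift^[j] x) := by
  have : NeZero n := ⟨by omega⟩
  have hadj : NoAdjacentOnes x := hx.2
  rw [ncard_neck] at hr
  have hdistinct : ∀ i j, i < r → j < r → i ≠ j → shift^[i] x ≠ shift^[j] x :=
    fun i j hi hj hij h => hij (iterate_injOn_Iio_minimalPeriod (hr ▸ hi) (hr ▸ hj) h)
  have h3 : 3 ≤ r := hr ▸ three_le_minimalPeriod_shift hk hn hx
  refine ⟨h3, fun i hi => ?_, ?_, hdistinct⟩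
  · have hne := hdistinct i (i + 1) (by omega) hi (by omega)
    rw [iterate_succ_apply'] at hne ⊢
    exact (hadj.iterate i).sAdj_shift hne
  · have hlast : shift (shift^[r - 1] x) = x := by
      rw [← iterate_succ_apply' shift, Nat.succ_eq_add_one, Nat.sub_add_cancel (by omega), hr,
        iterate_minimalPeriod]
    have hne : shift^[r - 1] x ≠ shift (shift^[r - 1] x) := by
      rw [hlast]
      exact hdistinct _ 0 (by omega) (by omega) (by omega)
    have hadj_last := (hadj.iterate (r - 1)).sAdj_shift hne
    rwa [hlast] at hadj_last
end

section
/- Fix p ∈ [n] and let U_p be the set of connectors (x,y) of S(n,k) with x_{p,p+1,p+2} = 1,0,0 (position p+2 unmatched in x) and σ^{−1}(y)_{p,p+1,p+2} = 0,1,0 (position p unmatched in σ^{−1}(y)). Then the connectors in U_p are pairwise disjoint: for any two distinct connectors (x,y), (x',y') ∈ U_p, the sets {x,y} and {x',y'} are disjoint. -/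
/-- `(x, y)` is a connector with the glider push at position `i`: `x` and `σ⁻¹(y)` agree
outside the three cyclically consecutive positions `i, i+1, i+2`, where `x` reads `1,0,–`
(with `i+2` unmatched in `x`) and `σ⁻¹(y)` reads `–,1,0` (with `i` unmatched in `σ⁻¹(y)`). -/
def ConnAt {n : ℕ} (i : ZMod n) (x y : ZMod n → Bool) : Prop :=
  x i = true ∧ x (i + 1) = false ∧ x (i + 2) = false ∧
  unshift y i = false ∧ unshift y (i - 1) = false ∧
  unshift y (i + 1) = true ∧ unshift y (i + 2) = false ∧
  ∀ j : ZMod n, j ≠ i → j ≠ i + 1 → j ≠ i + 2 → x j = unshift y j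

/-- `(x,y)` is a connector (at some position). -/
def Conn {n : ℕ} (x y : ZMod n → Bool) : Prop := ∃ i : ZMod n, ConnAt i x y

/-! A connector at `p` is determined by either of its ends, since both `x` and `σ⁻¹(y)` are
fixed on the window `p, p+1, p+2` and agree elsewhere. Two distinct connectors at `p` therefore
differ in both ends, and cannot share a vertex crosswise because `x_p = 1` while `y_p = 0`. -/

theorem unshift_injective {n : ℕ} : Function.Injective (unshift : (ZMod n → Bool) → _) := by
  intro y y' h
  funext j
  simpa [unshift] using congrFun h (j - 1)

namespace ConnAt

variable {n : ℕ} {i : ZMod n} {x y x' y' : ZMod n → Bool}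

theorem right_apply_self (hc : ConnAt i x y) : y i = false := by
  simpa [unshift] using hc.2.2.2.2.1

theorem left_apply_eq_iff (hc : ConnAt i x y) (hc' : ConnAt i x' y') (j : ZMod n) :
    x j = x' j ↔ unshift y j = unshift y' j := by
  obtain ⟨hx0, hx1, hx2, hy0, -, hy1, hy2, hagree⟩ := hc
  obtain ⟨hx0', hx1', hx2', hy0', -, hy1', hy2', hagree'⟩ := hc'
  by_cases h0 : j = i
  · subst h0; simp [*]
  by_cases h1 : j = i + 1
  · subst h1; simp [*]
  by_cases h2 : j = i + 2
  · subst h2; simp [*]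
  rw [hagree j h0 h1 h2, hagree' j h0 h1 h2]

theorem left_eq_iff (hc : ConnAt i x y) (hc' : ConnAt i x' y') : x = x' ↔ y = y' := by
  rw [funext_iff, forall_congr' (left_apply_eq_iff hc hc'), ← funext_iff]
  exact unshift_injective.eq_iff

theorem left_ne_right (hc : ConnAt i x y) (hc' : ConnAt i x' y') : x ≠ y' := by
  rintro rfl
  simpa [hc.1] using hc'.right_apply_self

end ConnAt

theorem connectors_pairwise_disjoint_general (n : ℕ)
    (p : ZMod n) (x y x' y' : ZMod n → Bool)
    (hc : ConnAt p x y) (hc' : ConnAt p x' y')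
    (hne : (x, y) ≠ (x', y')) :
    x ≠ x' ∧ x ≠ y' ∧ y ≠ x' ∧ y ≠ y' := by
  have hxx : x ≠ x' := fun h => hne (by rw [h, (hc.left_eq_iff hc').mp h])
  refine ⟨hxx, hc.left_ne_right hc', (hc'.left_ne_right hc).symm, ?_⟩
  exact fun h => hxx ((hc.left_eq_iff hc').mpr h)

/-- the connectors in `U_p` (connectors with the glider push at the fixed
position `p`) are pairwise disjoint: two distinct connectors `(x,y), (x',y') ∈ U_p`
satisfy `{x,y} ∩ {x',y'} = ∅`. -/
theorem connectors_pairwise_disjoint (n k : ℕ) (hk : 1 ≤ k) (hn : 2 * k + 1 ≤ n)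
    (p : ZMod n) (x y x' y' : ZMod n → Bool)
    (hx : IsSchrijverVertex n k x) (hy : IsSchrijverVertex n k y)
    (hx' : IsSchrijverVertex n k x') (hy' : IsSchrijverVertex n k y')
    (hc : ConnAt p x y) (hc' : ConnAt p x' y')
    (hne : (x, y) ≠ (x', y')) :
    x ≠ x' ∧ x ≠ y' ∧ y ≠ x' ∧ y ≠ y' :=
  connectors_pairwise_disjoint_general n p x y x' y' hc hc' hne
end

section
/- Fix p ∈ [n]. Define the auxiliary graph H on the cycles of the shift cycle factor of S(n,k), with an edge between C(x) and C(y) for every connector (x,y) ∈ U_p with C(x) ≠ C(y). Then H is connected. -/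
/-- Nodes of the auxiliary graph: the cycles of the shift cycle factor of `S(n,k)`,
identified with the necklaces of vertices. -/
def Node (n k : ℕ) : Type := {S : Set (ZMod n → Bool) // ∃ x, IsSchrijverVertex n k x ∧ S = neck x}

/-- The auxiliary graph on the cycles of the factor, with an edge between two distinct
cycles whenever some pair related by `P` has its two members on the two cycles. -/
def auxGraph (n k : ℕ) (P : (ZMod n → Bool) → (ZMod n → Bool) → Prop) :
    SimpleGraph (Node n k) where
  Adj A B := A ≠ B ∧ ∃ x y, P x y ∧ ((x ∈ A.1 ∧ y ∈ B.1) ∨ (x ∈ B.1 ∧ y ∈ A.1))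
  symm := by
    constructor
    rintro A B ⟨hne, x, y, hxy, h⟩
    exact ⟨hne.symm, x, y, hxy, h.symm⟩
  loopless := by constructor; rintro A ⟨hne, -⟩; exact hne rfl

/-!
A glider push at `p` moves a `1` one step forward. After rotating a vertex so that the `1` to be
moved sits at `p`, the rotated vertex and the shift of its pushed version form a connector in
`U_p`; hence moving any `1` one step forward (when the two positions after it are `0`) keeps the
cycle in the same component of `H`.

Rotate a vertex so that it has a `1` at position `0`. Unless the vertex is `1010…10 0…0`, some
other `1` is preceded by two `0`s and can be moved one step back; this lowers the sum of the
positions of the `1`s, so by induction every cycle is joined to the cycle of `1010…10 0…0`.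
-/

namespace SchrijverCycles

variable {n k : ℕ}

def rot (m : ZMod n) (x : ZMod n → Bool) : ZMod n → Bool := fun i => x (i - m)

@[simp] lemma rot_apply (m : ZMod n) (x : ZMod n → Bool) (i : ZMod n) : rot m x i = x (i - m) :=
  rfl

lemma shift_eq_rot_one (x : ZMod n → Bool) : shift x = rot 1 x := rfl

lemma rot_rot (a b : ZMod n) (x : ZMod n → Bool) : rot a (rot b x) = rot (a + b) x := by
  funext i
  simp only [rot_apply, sub_sub]

lemma iterate_shift (j : ℕ) (x : ZMod n → Bool) : shift^[j] x = rot j x := by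
  induction j with
  | zero => funext i; simp
  | succ j ih =>
    rw [Function.iterate_succ_apply', ih, shift_eq_rot_one, rot_rot, Nat.cast_succ, add_comm]

section NeZero

variable [NeZero n]

lemma mem_neck_iff {x y : ZMod n → Bool} : y ∈ neck x ↔ ∃ m : ZMod n, rot m x = y := by
  simp only [neck, Set.mem_ofPred_eq, iterate_shift]
  exact ⟨fun ⟨j, h⟩ => ⟨j, h⟩, fun ⟨m, h⟩ => ⟨m.val, by rwa [ZMod.natCast_zmod_val]⟩⟩

lemma rot_mem_neck (m : ZMod n) (x : ZMod n → Bool) : rot m x ∈ neck x :=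
  mem_neck_iff.2 ⟨m, rfl⟩

lemma neck_rot (m : ZMod n) (x : ZMod n → Bool) : neck (rot m x) = neck x := by
  ext y
  simp only [mem_neck_iff, rot_rot]
  exact ⟨fun ⟨a, h⟩ => ⟨a + m, h⟩, fun ⟨a, h⟩ => ⟨a - m, by rwa [sub_add_cancel]⟩⟩

end NeZero

lemma IsSchrijverVertex.apply_sub_one {x : ZMod n → Bool} (hx : IsSchrijverVertex n k x)
    {i : ZMod n} (h : x i = true) : x (i - 1) = false := by
  cases h' : x (i - 1)
  · rfl
  · simpa [h] using hx.2 _ h'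

lemma isSchrijverVertex_rot {x : ZMod n → Bool} (hx : IsSchrijverVertex n k x) (m : ZMod n) :
    IsSchrijverVertex n k (rot m x) := by
  refine ⟨?_, fun i h => by simpa [sub_add_eq_add_sub] using hx.2 (i - m) h⟩
  have : {i | rot m x i = true} = (· + m) '' {i | x i = true} := by
    ext i
    simp [sub_eq_add_neg]
  rw [this, Set.ncard_image_of_injective _ (add_left_injective m), hx.1]

def move (x : ZMod n → Bool) (a b : ZMod n) : ZMod n → Bool :=
  fun i => if i = b then true else if i = a then false else x i

lemma move_apply_of_ne {x : ZMod n → Bool} {a b i : ZMod n} (ha : i ≠ a) (hb : i ≠ b) :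
    move x a b i = x i := by
  simp [move, ha, hb]

lemma rot_move (m : ZMod n) (x : ZMod n → Bool) (a b : ZMod n) :
    rot m (move x a b) = move (rot m x) (a + m) (b + m) := by
  funext i
  simp only [rot_apply, move, sub_eq_iff_eq_add]

lemma move_move {x : ZMod n → Bool} {a b : ZMod n} (ha : x a = true) (hb : x b = false) :
    move (move x a b) b a = x := by
  funext i
  unfold move
  split_ifs <;> simp_all

lemma isSchrijverVertex_move [NeZero n] {x : ZMod n → Bool} (hx : IsSchrijverVertex n k x)
    {a b : ZMod n} (ha : x a = true) (hb : x b = false)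
    (hsucc : move x a b (b + 1) = false) (hpred : move x a b (b - 1) = false) :
    IsSchrijverVertex n k (move x a b) := by
  have hab : a ≠ b := by rintro rfl; simp [ha] at hb
  constructor
  · have hones : {i | move x a b i = true} = insert b ({i | x i = true} \ {a}) := by
      ext i
      by_cases hib : i = b <;> by_cases hia : i = a <;> simp_all [move]
    rw [hones, Set.ncard_insert_of_notMem (by simp [hb]),
      Set.ncard_sdiff_singleton_add_one (show a ∈ {i | x i = true} from ha), hx.1]
  · intro i hi
    by_cases hib : i = b
    · rwa [hib]
    have hia : i ≠ a := by rintro rfl; simp [move, hib] at hi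
    rw [move_apply_of_ne hia hib] at hi
    by_cases hb' : i + 1 = b
    · rw [← hb', add_sub_cancel_right, move_apply_of_ne hia (hb' ▸ hib), hi] at hpred
      exact absurd hpred (by decide)
    by_cases ha' : i + 1 = a
    · simp [move, ha', hab]
    · rw [move_apply_of_ne ha' hb', hx.2 i hi]

lemma natCast_ne_zero_of_lt {a : ℕ} (h0 : 0 < a) (h : a < n) : (a : ZMod n) ≠ 0 := by
  rw [Ne, ZMod.natCast_eq_zero_iff]
  exact Nat.not_dvd_of_pos_of_lt h0 h

lemma one_ne_zero_and_two_ne_zero (hn : 3 ≤ n) : (1 : ZMod n) ≠ 0 ∧ (2 : ZMod n) ≠ 0 := by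
  have h1 : ((1 : ℕ) : ZMod n) ≠ 0 := natCast_ne_zero_of_lt one_pos (by omega)
  have h2 : ((2 : ℕ) : ZMod n) ≠ 0 := natCast_ne_zero_of_lt two_pos (by omega)
  push_cast at h1 h2
  exact ⟨h1, h2⟩

lemma unshift_shift (x : ZMod n → Bool) : unshift (shift x) = x := by
  funext i
  simp [unshift, shift]

lemma connAt_move (hn : 3 ≤ n) {x : ZMod n → Bool} (hx : IsSchrijverVertex n k x) {p : ZMod n}
    (hp : x p = true) (hp2 : x (p + 2) = false) : ConnAt p x (shift (move x p (p + 1))) := by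
  obtain ⟨h1, h2⟩ := one_ne_zero_and_two_ne_zero hn
  have hp0 : p ≠ p + 1 := fun h => h1 (by linear_combination -h)
  have hm0 : p - 1 ≠ p := fun h => h1 (by linear_combination -h)
  have hm1 : p - 1 ≠ p + 1 := fun h => h2 (by linear_combination -h)
  have h20 : p + 2 ≠ p := fun h => h2 (by linear_combination h)
  have h21 : p + 2 ≠ p + 1 := fun h => h1 (by linear_combination h)
  rw [ConnAt, unshift_shift]
  refine ⟨hp, hx.2 p hp, hp2, by simp [move, hp0], ?_, by simp [move], ?_,
    fun j hj0 hj1 _ => (move_apply_of_ne hj0 hj1).symm⟩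
  · rw [move_apply_of_ne hm0 hm1, IsSchrijverVertex.apply_sub_one hx hp]
  · rw [move_apply_of_ne h20 h21, hp2]

abbrev connectorGraph (n k : ℕ) (p : ZMod n) : SimpleGraph (Node n k) :=
  auxGraph n k (fun x y => IsSchrijverVertex n k x ∧ IsSchrijverVertex n k y ∧ ConnAt p x y)

def Node.of (x : ZMod n → Bool) (hx : IsSchrijverVertex n k x) : Node n k := ⟨neck x, x, hx, rfl⟩

lemma Node.of_rot [NeZero n] {x : ZMod n → Bool} (m : ZMod n) (h : IsSchrijverVertex n k (rot m x))
    (hx : IsSchrijverVertex n k x) : Node.of (rot m x) h = Node.of x hx :=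
  Subtype.ext (neck_rot m x)

lemma auxGraph_reachable {P : (ZMod n → Bool) → (ZMod n → Bool) → Prop} {A B : Node n k}
    {x y : ZMod n → Bool} (hxy : P x y) (hx : x ∈ A.1) (hy : y ∈ B.1) :
    (auxGraph n k P).Reachable A B := by
  by_cases hAB : A = B
  · exact hAB ▸ .refl A
  · exact SimpleGraph.Adj.reachable ⟨hAB, x, y, hxy, .inl ⟨hx, hy⟩⟩

lemma reachable_move (hn : 3 ≤ n) (p : ZMod n) {x : ZMod n → Bool} (hx : IsSchrijverVertex n k x)
    {y : ZMod n → Bool} (hy : IsSchrijverVertex n k y) {u : ZMod n} (hu : x u = true)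
    (hu2 : x (u + 2) = false) (hxy : move x u (u + 1) = y) :
    (connectorGraph n k p).Reachable (Node.of x hx) (Node.of y hy) := by
  subst hxy
  have : NeZero n := ⟨by omega⟩
  set m := p - u
  have hx' := isSchrijverVertex_rot hx m
  have hp : rot m x p = true := by simpa [m] using hu
  have hp2 : rot m x (p + 2) = false := by
    rw [rot_apply, show p + 2 - m = u + 2 by ring, hu2]
  have hrot : move (rot m x) p (p + 1) = rot m (move x u (u + 1)) := by
    rw [rot_move]
    congr 1 <;> ring
  refine auxGraph_reachable ⟨hx', ?_, connAt_move hn hx' hp hp2⟩ (rot_mem_neck m x) ?_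
  · rw [hrot, shift_eq_rot_one]
    exact isSchrijverVertex_rot (isSchrijverVertex_rot hy m) 1
  · rw [hrot, shift_eq_rot_one, rot_rot]
    exact rot_mem_neck _ _

def evenPositions (n m : ℕ) : Finset (ZMod n) :=
  (Finset.range m).image fun j => ((2 * j : ℕ) : ZMod n)

lemma card_evenPositions {m : ℕ} (h : 2 * m ≤ n + 1) :
    (evenPositions n m).card = m := by
  rw [evenPositions, Finset.card_image_of_injOn, Finset.card_range]
  intro a ha b hb hab
  simp only [Finset.coe_range, Set.mem_Iio] at ha hb
  rw [ZMod.natCast_eq_natCast_iff', Nat.mod_eq_of_lt (by omega),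
    Nat.mod_eq_of_lt (by omega)] at hab
  omega

def packed (k : ℕ) : ZMod n → Bool := fun i => decide (i ∈ evenPositions n k)

lemma isSchrijverVertex_packed (hn : 2 * k + 1 ≤ n) : IsSchrijverVertex n k (packed k) := by
  refine ⟨by simpa [packed] using card_evenPositions (n := n) (m := k) (by omega), ?_⟩
  intro i hi
  simp only [packed, evenPositions, decide_eq_true_eq, decide_eq_false_iff_not,
    Finset.mem_image, Finset.mem_range] at hi ⊢
  obtain ⟨j, hj, rfl⟩ := hi
  rintro ⟨j', hj', h⟩
  rw [← Nat.cast_succ, ZMod.natCast_eq_natCast_iff', Nat.mod_eq_of_lt (by omega),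
    Nat.mod_eq_of_lt (by omega)] at h
  omega

lemma eq_packed [NeZero n] (hn : 2 * k + 1 ≤ n) {x : ZMod n → Bool}
    (hx : IsSchrijverVertex n k x) (h0 : x 0 = true)
    (hclosed : ∀ a, x a = true → a ≠ 0 → x (a - 2) = true) : x = packed k := by
  have chain : ∀ m < n, x m = true →
      Even m ∧ ↑(evenPositions n (m / 2 + 1)) ⊆ {i | x i = true} := by
    intro m
    induction m using Nat.strong_induction_on with
    | _ m ih =>
    intro hm hxm
    rcases m with _ | _ | m
    · refine ⟨even_two_mul 0, fun i hi => ?_⟩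
      obtain ⟨j, hj, rfl⟩ := Finset.mem_image.1 hi
      obtain rfl : j = 0 := by simpa using hj
      simpa using h0
    · have := hx.2 0 h0
      simp_all
    · have hxm2 : x m = true := by
        have := hclosed _ hxm (natCast_ne_zero_of_lt (by omega) hm)
        rwa [show ((m + 1 + 1 : ℕ) : ZMod n) - 2 = m by push_cast; ring] at this
      obtain ⟨heven, hsub⟩ := ih m (by omega) (by omega) hxm2
      refine ⟨by simpa [Nat.even_add] using heven, fun i hi => ?_⟩
      obtain ⟨j, hj, rfl⟩ := Finset.mem_image.1 hi
      rw [Finset.mem_range] at hj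
      rcases Nat.lt_or_ge j (m / 2 + 1) with hj' | hj'
      · exact hsub (Finset.mem_image_of_mem _ (Finset.mem_range.2 hj'))
      · obtain ⟨r, rfl⟩ := heven
        have : 2 * j = r + r + 2 := by omega
        rw [Set.mem_ofPred_eq, this]
        exact hxm
  have hsub : {i | x i = true} ⊆ ↑(evenPositions n k) := by
    intro a ha
    obtain ⟨heven, hsub⟩ := chain a.val (ZMod.val_lt a) (by simpa using ha)
    have hlt : a.val / 2 < k := by
      by_contra hge
      have hmono : evenPositions n (k + 1) ⊆ evenPositions n (a.val / 2 + 1) :=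
        Finset.image_subset_image (Finset.range_subset_range.2 (by omega))
      have := Set.ncard_le_ncard ((Finset.coe_subset.2 hmono).trans hsub)
      rw [Set.ncard_coe_finset, card_evenPositions (by omega), hx.1] at this
      omega
    refine Finset.mem_image.2 ⟨a.val / 2, Finset.mem_range.2 hlt, ?_⟩
    rw [Nat.mul_div_cancel' (even_iff_two_dvd.mp heven), ZMod.natCast_zmod_val]
  have hones := Set.eq_of_subset_of_ncard_le hsub
    (by rw [hx.1, Set.ncard_coe_finset, card_evenPositions (by omega)]) (Set.toFinite _)
  funext i
  simp [packed, ← Finset.mem_coe, ← hones]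

section Weight

variable [NeZero n]

def weight (x : ZMod n → Bool) : ℕ := ∑ i, if x i = true then i.val else 0

lemma weight_move {x : ZMod n → Bool} {a b : ZMod n} (ha : x a = true) (hb : x b = false)
    (hab : a ≠ b) : weight (move x a b) + a.val = weight x + b.val := by
  have hsplit : ∀ y : ZMod n → Bool, weight y = ∑ i ∈ Finset.univ \ {a, b},
      (if y i = true then i.val else 0) +
      ((if y a = true then a.val else 0) + (if y b = true then b.val else 0)) := by
    intro y
    rw [weight, ← Finset.sum_sdiff (Finset.subset_univ {a, b}), Finset.sum_pair hab]
  have hrest : ∑ i ∈ Finset.univ \ {a, b}, (if move x a b i = true then i.val else 0) =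
      ∑ i ∈ Finset.univ \ {a, b}, (if x i = true then i.val else 0) := by
    refine Finset.sum_congr rfl fun i hi => ?_
    simp only [Finset.mem_sdiff, Finset.mem_insert, Finset.mem_singleton, not_or] at hi
    rw [move_apply_of_ne hi.2.1 hi.2.2]
  rw [hsplit, hsplit x, hrest]
  simp only [move, hab, ↓reduceIte, Bool.false_eq_true, zero_add, ha, hb, add_zero]
  omega

lemma weight_move_sub_one_lt {x : ZMod n → Bool} {a : ZMod n} (ha : x a = true)
    (ha1 : x (a - 1) = false) (ha0 : a ≠ 0) : weight (move x a (a - 1)) < weight x := by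
  have hn : n ≠ 1 := by rintro rfl; exact ha0 (Subsingleton.elim _ _)
  have hval : (a - 1).val + 1 = a.val := by
    rw [ZMod.val_sub, ZMod.val_one'' hn]
    · have := ZMod.val_pos.2 ha0
      omega
    · rw [ZMod.val_one'' hn]
      exact ZMod.val_pos.2 ha0
  have := weight_move ha ha1 (fun h => by simp [← h, ha] at ha1)
  omega

end Weight

lemma isSchrijverVertex_move_sub_one [NeZero n] (hn : 3 ≤ n) {x : ZMod n → Bool}
    (hx : IsSchrijverVertex n k x) {a : ZMod n} (ha : x a = true) (ha2 : x (a - 2) = false) :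
    IsSchrijverVertex n k (move x a (a - 1)) := by
  obtain ⟨h1, h2⟩ := one_ne_zero_and_two_ne_zero hn
  refine isSchrijverVertex_move hx ha (IsSchrijverVertex.apply_sub_one hx ha) ?_ ?_
  · have hne : a ≠ a - 1 := fun h => h1 (by linear_combination h)
    simp [move, hne]
  · rw [move_apply_of_ne (fun h => h2 (by linear_combination -h))
      (fun h => h1 (by linear_combination -h)), sub_sub, one_add_one_eq_two, ha2]

lemma reachable_move_sub_one (hn : 3 ≤ n) (p : ZMod n) {x : ZMod n → Bool}
    (hx : IsSchrijverVertex n k x) {a : ZMod n} (hy : IsSchrijverVertex n k (move x a (a - 1)))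
    (ha : x a = true) : (connectorGraph n k p).Reachable (Node.of _ hy) (Node.of x hx) := by
  obtain ⟨h1, h2⟩ := one_ne_zero_and_two_ne_zero hn
  refine reachable_move hn p hy hx (u := a - 1) (by simp [move]) ?_ ?_
  · rw [move_apply_of_ne (fun h => h1 (by linear_combination h))
      (fun h => h2 (by linear_combination h)), show a - 1 + 2 = a + 1 by ring, hx.2 a ha]
  · rw [sub_add_cancel]
    exact move_move ha (IsSchrijverVertex.apply_sub_one hx ha)

lemma reachable_packed (hn : 2 * k + 1 ≤ n) (p : ZMod n) {x : ZMod n → Bool}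
    (hx : IsSchrijverVertex n k x) (h0 : x 0 = true) :
    (connectorGraph n k p).Reachable (Node.of x hx) (Node.of _ (isSchrijverVertex_packed hn)) := by
  have : NeZero n := ⟨by omega⟩
  have hk : 0 < k := hx.1 ▸ (Set.ncard_pos (Set.toFinite _)).2 ⟨0, h0⟩
  induction hw : weight x using Nat.strong_induction_on generalizing x with
  | _ w ih =>
  by_cases hclosed : ∀ a, x a = true → a ≠ 0 → x (a - 2) = true
  · obtain rfl := eq_packed hn hx h0 hclosed
    rfl
  push Not at hclosed
  obtain ⟨a, ha, ha0, ha2⟩ := hclosed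
  rw [ne_eq, Bool.not_eq_true] at ha2
  have hy := isSchrijverVertex_move_sub_one (by omega) hx ha ha2
  have hy0 : move x a (a - 1) 0 = true := by
    unfold move
    split_ifs <;> simp_all
  have hlt := weight_move_sub_one_lt ha (IsSchrijverVertex.apply_sub_one hx ha) ha0
  exact (reachable_move_sub_one (by omega) p hx hy ha).symm.trans (ih _ (hw ▸ hlt) hy hy0 rfl)

end SchrijverCycles

open SchrijverCycles

/-- the auxiliary graph `H[U_p]` on the cycles of the shift cycle factor of
`S(n,k)`, with an edge between `C(x)` and `C(y)` for every connector `(x,y) ∈ U_p` lying on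
distinct cycles, is connected. -/
theorem aux_graph_connected (n k : ℕ) (hk : 1 ≤ k) (hn : 2 * k + 1 ≤ n) (p : ZMod n) :
    (auxGraph n k (fun x y =>
        IsSchrijverVertex n k x ∧ IsSchrijverVertex n k y ∧ ConnAt p x y)).Connected := by
  have : NeZero n := ⟨by omega⟩
  have hc := isSchrijverVertex_packed hn
  have toPacked : ∀ A : Node n k, (connectorGraph n k p).Reachable A (Node.of _ hc) := by
    rintro ⟨_, x, hx, rfl⟩
    obtain ⟨q, hq⟩ := Set.nonempty_of_ncard_ne_zero (hx.1.trans_ne (by omega))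
    have hx' := isSchrijverVertex_rot hx (-q)
    change (connectorGraph n k p).Reachable (Node.of x hx) _
    rw [← Node.of_rot (-q) hx' hx]
    exact reachable_packed hn p hx' (by simpa using hq)
  have : Nonempty (Node n k) := ⟨Node.of _ hc⟩
  exact ⟨fun A B => (toPacked A).trans (toPacked B).symm⟩
end

section
/- Let G be a graph, C a cycle factor of G (a spanning collection of pairwise vertex-disjoint cycles), and F a family of 4-cycles in G such that: (1) the 4-cycles in F are pairwise edge-disjoint; (2) each 4-cycle in F shares exactly one edge with each of exactly two distinct cycles of C and its other two edges lie outside C; and (3) the multigraph on the cycles of C with an edge for each element of F joining the two cycles it meets is a spanning tree. Then the symmetric difference of the edge set of C with the edge sets of the 4-cycles in F is a Hamilton cycle of G. -/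
/-!
Write `H_S` for `C` with the 4-cycles `i ∈ S` switched in. Switching in one more 4-cycle
`abcd` replaces the edges `ab, cd` by `bc, da`, which preserves all degrees. By induction on
`S`, `H_S` is 2-regular and any two vertices whose cycles of `C` are joined by tree edges from
`S` are connected in `H_S`. In the inductive step `a` and `c` lie in different components of
`H_S`: otherwise the tree minus edge `i` would still be connected, with too few edges. As all
degrees of `H_S` are even, neither `ab` nor `cd` is a bridge, and since they lie in different
components, deleting both disconnects nothing; the new edges `bc` and `da` then merge the two
components.
-/

open Relation SimpleGraph

section JoinedBy

variable {N κ : Type*}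

/-- Adjacency in the multigraph on `N` with an edge from `f j` to `g j` for each `j ∈ S`. -/
def JoinedBy (f g : κ → N) (S : Set κ) (x y : N) : Prop :=
  ∃ j ∈ S, (f j = x ∧ g j = y) ∨ (f j = y ∧ g j = x)

instance (f g : κ → N) (S : Set κ) : Std.Symm (JoinedBy f g S) :=
  ⟨fun _ _ ⟨j, hj, hxy⟩ => ⟨j, hj, hxy.symm⟩⟩

lemma card_le_ncard_add_one_of_joinedBy [Finite N] [Finite κ] {f g : κ → N} {S : Set κ}
    (h : ∀ x y, ReflTransGen (JoinedBy f g S) x y) : Nat.card N ≤ S.ncard + 1 := by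
  cases isEmpty_or_nonempty N
  · simp
  let T : SimpleGraph N := .fromEdgeSet ((fun j => s(f j, g j)) '' S)
  have hT : T.Connected := by
    refine (connected_iff T).2 ⟨fun x y => ?_, inferInstance⟩
    refine (reachable_iff_reflTransGen x y).2 (reflTransGen_closed ?_ _ _ (h x y))
    rintro x y ⟨j, hj, ⟨rfl, rfl⟩ | ⟨rfl, rfl⟩⟩
    all_goals
      by_cases hxy : f j = g j
      · rw [hxy]
      · refine .single ⟨⟨j, hj, ?_⟩, ?_⟩ <;> simp [Sym2.eq_swap, hxy, Ne.symm hxy]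
  calc Nat.card N ≤ Nat.card T.edgeSet + 1 := hT.card_vert_le_card_edgeSet_add_one
    _ ≤ S.ncard + 1 := by
      rw [Nat.card_coe_set_eq, edgeSet_fromEdgeSet]
      gcongr
      exact (Set.ncard_le_ncard Set.sdiff_subset).trans Set.ncard_image_le

lemma not_reflTransGen_joinedBy_of_notMem [Finite N] [Finite κ] {f g : κ → N}
    (hcard : Nat.card κ + 1 = Nat.card N)
    (hconn : ∀ x y, ReflTransGen (JoinedBy f g Set.univ) x y)
    {S : Set κ} {i : κ} (hi : i ∉ S) : ¬ ReflTransGen (JoinedBy f g S) (f i) (g i) := by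
  intro hfg
  have hrest : ∀ x y, ReflTransGen (JoinedBy f g {i}ᶜ) x y := by
    have hS : ReflTransGen (JoinedBy f g {i}ᶜ) (f i) (g i) :=
      ReflTransGen.mono (fun _ _ ⟨j, hj, hxy⟩ => ⟨j, fun hji => hi (hji ▸ hj), hxy⟩) _ _ hfg
    refine fun x y => reflTransGen_closed ?_ _ _ (hconn x y)
    rintro x y ⟨j, -, hxy⟩
    by_cases hji : j = i
    · subst hji
      rcases hxy with ⟨rfl, rfl⟩ | ⟨rfl, rfl⟩
      exacts [hS, Std.Symm.symm _ _ hS]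
    · exact .single ⟨j, hji, hxy⟩
  have hbound := card_le_ncard_add_one_of_joinedBy hrest
  have hrest_card : ({i}ᶜ : Set κ).ncard + 1 = Nat.card κ := by
    rw [Set.ncard_compl, Set.ncard_singleton, ← Set.ncard_univ]
    have hpos := Set.ncard_pos (s := (Set.univ : Set κ)) |>.2 ⟨i, trivial⟩
    omega
  omega

end JoinedBy

namespace SimpleGraph

variable {V : Type*} {G H X : SimpleGraph V} {a b c d : V}

lemma Reachable.of_forall_adj (hGH : ∀ ⦃x y⦄, G.Adj x y → H.Reachable x y) {u w : V}
    (h : G.Reachable u w) : H.Reachable u w := by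
  rw [reachable_iff_reflTransGen] at h ⊢
  exact reflTransGen_closed (fun x y hxy => (reachable_iff_reflTransGen x y).1 (hGH hxy)) _ _ h

lemma degree_eq_ncard_neighborSet [Fintype V] [DecidableRel G.Adj] (v : V) :
    G.degree v = (G.neighborSet v).ncard := by
  rw [← card_neighborSet_eq_degree, Set.ncard_eq_toFinset_card', Set.toFinset_card]

/-- Parity: in the component of `u` after deleting `uv`, the vertex `u` would be the only
vertex of odd degree. -/
lemma Adj.not_isBridge_of_even_ncard_neighborSet [Finite V]
    (hG : ∀ v, Even (G.neighborSet v).ncard) {u v : V} (huv : G.Adj u v) :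
    ¬ G.IsBridge s(u, v) := by
  classical
  have := Fintype.ofFinite V
  rw [isBridge_iff]
  intro hsep
  set G' := G.deleteEdges {s(u, v)}
  set Z := (G'.connectedComponentMk u).toSimpleGraph.spanningCoe
  have hZ : ∀ x y, Z.Adj x y ↔ G'.Reachable u x ∧ G.Adj x y ∧ s(x, y) ≠ s(u, v) := by
    intro x y
    rw [ConnectedComponent.adj_spanningCoe_toSimpleGraph, ConnectedComponent.mem_supp_iff,
      ConnectedComponent.eq, deleteEdges_adj, Set.mem_singleton_iff, reachable_comm]
  have hu : Z.neighborSet u = G.neighborSet u \ {v} := by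
    ext y
    simp [hZ, huv.ne]
  have hx : ∀ x ≠ u, Even (Z.degree x) := by
    intro x hxu
    by_cases hx : G'.Reachable u x
    · have hxv : x ≠ v := by rintro rfl; exact hsep hx
      have : Z.neighborSet x = G.neighborSet x := by
        ext y
        simp [hZ, hx, hxu, hxv]
      rw [degree_eq_ncard_neighborSet, this]
      exact hG x
    · have : Z.neighborSet x = ∅ := by
        ext y
        simp [hZ, hx]
      simp [degree_eq_ncard_neighborSet, this]
  have hodd : Odd (Z.degree u) := by
    obtain ⟨k, hk⟩ := hG u
    have hv : v ∈ G.neighborSet u := huv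
    have : 0 < (G.neighborSet u).ncard := (Set.ncard_pos).2 ⟨v, hv⟩
    rw [degree_eq_ncard_neighborSet, hu, Set.ncard_sdiff_singleton_of_mem hv]
    exact ⟨k - 1, by omega⟩
  have hnone : ({x | x ≠ u ∧ Odd (Z.degree x)} : Finset V) = ∅ := by
    ext x
    simpa using fun hxu => Nat.not_odd_iff_even.2 (hx x hxu)
  simpa [hnone] using Z.odd_card_odd_degree_vertices_ne u hodd

def switch (X : SimpleGraph V) (a b c d : V) : SimpleGraph V :=
  fromEdgeSet (symmDiff X.edgeSet {s(a, b), s(b, c), s(c, d), s(d, a)})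

lemma ncard_neighborSet_fromEdgeSet_symmDiff_add [Finite V] (X : SimpleGraph V)
    {Q : Set (Sym2 V)} (hQ : ∀ e ∈ Q, ¬e.IsDiag) (v : V) :
    ((fromEdgeSet (symmDiff X.edgeSet Q)).neighborSet v).ncard
        + {w | s(v, w) ∈ X.edgeSet ∩ Q}.ncard =
      (X.neighborSet v).ncard + {w | s(v, w) ∈ Q \ X.edgeSet}.ncard := by
  have hunion : (fromEdgeSet (symmDiff X.edgeSet Q)).neighborSet v
      ∪ {w | s(v, w) ∈ X.edgeSet ∩ Q} = X.neighborSet v ∪ {w | s(v, w) ∈ Q \ X.edgeSet} := by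
    ext w
    have hdiag := hQ s(v, w)
    simp only [Set.mem_union, mem_neighborSet, fromEdgeSet_adj, Set.mem_symmDiff, mem_edgeSet,
      Set.mem_ofPred_eq, Set.mem_inter_iff, Set.mem_sdiff, Sym2.mk_isDiag_iff] at hdiag ⊢
    have hne := X.ne_of_adj (a := v) (b := w)
    tauto
  rw [← Set.ncard_union_eq, hunion, Set.ncard_union_eq]
  · exact Set.disjoint_left.2 fun w hw hw' => hw'.2 hw
  · exact Set.disjoint_left.2 fun w hw hw' => (Set.mem_symmDiff.1 hw.1).elim
      (fun h => h.2 hw'.2) (fun h => h.2 hw'.1)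

lemma ncard_setOf_mk_mem_pair [DecidableEq V] (hab : a ≠ b) (hac : a ≠ c) (had : a ≠ d)
    (hbc : b ≠ c) (hbd : b ≠ d) (hcd : c ≠ d) (v : V) :
    {w | s(v, w) ∈ ({s(a, b), s(c, d)} : Set (Sym2 V))}.ncard =
      if v = a ∨ v = b ∨ v = c ∨ v = d then 1 else 0 := by
  simp only [Set.mem_insert_iff, Set.mem_singleton_iff, Sym2.eq_iff]
  split_ifs with hv
  · rw [Set.ncard_eq_one]
    rcases hv with rfl | rfl | rfl | rfl
    · exact ⟨b, by ext w; grind⟩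
    · exact ⟨a, by ext w; grind⟩
    · exact ⟨d, by ext w; grind⟩
    · exact ⟨c, by ext w; grind⟩
  · convert Set.ncard_empty V
    ext w
    grind

lemma ncard_neighborSet_switch [Finite V] (hab : X.Adj a b) (hcd : X.Adj c d)
    (hbc : ¬X.Adj b c) (hda : ¬X.Adj d a) (hbc' : b ≠ c) (hda' : d ≠ a) (v : V) :
    ((X.switch a b c d).neighborSet v).ncard = (X.neighborSet v).ncard := by
  classical
  have hac : a ≠ c := by rintro rfl; exact hda hcd.symm
  have hbd : b ≠ d := by rintro rfl; exact hbc hcd.symm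
  have hinter : X.edgeSet ∩ {s(a, b), s(b, c), s(c, d), s(d, a)} = {s(a, b), s(c, d)} := by
    ext e
    simp only [Set.mem_inter_iff, Set.mem_insert_iff, Set.mem_singleton_iff]
    constructor
    · rintro ⟨he, rfl | rfl | rfl | rfl⟩ <;> simp_all
    · rintro (rfl | rfl) <;> simp [hab, hcd]
  have hdiff : {s(a, b), s(b, c), s(c, d), s(d, a)} \ X.edgeSet = {s(b, c), s(d, a)} := by
    ext e
    simp only [Set.mem_sdiff, Set.mem_insert_iff, Set.mem_singleton_iff]
    constructor
    · rintro ⟨rfl | rfl | rfl | rfl, he⟩ <;> simp_all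
    · rintro (rfl | rfl) <;> simp [hbc, hda]
  have hQ : ∀ e ∈ ({s(a, b), s(b, c), s(c, d), s(d, a)} : Set (Sym2 V)), ¬e.IsDiag := by
    simp [hab.ne, hbc', hcd.ne, hda']
  have hsum := X.ncard_neighborSet_fromEdgeSet_symmDiff_add hQ v
  rw [hinter, hdiff, ncard_setOf_mk_mem_pair hab.ne hac hda'.symm hbc' hbd hcd.ne,
    ncard_setOf_mk_mem_pair hbc' hbd hab.ne.symm hcd.ne hac.symm hda'] at hsum
  have hsame : (if v = a ∨ v = b ∨ v = c ∨ v = d then 1 else 0) =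
      (if v = b ∨ v = c ∨ v = d ∨ v = a then 1 else 0) := by
    simp only [or_comm, or_left_comm]
  rw [switch]
  omega

/-- A walk from `a` to `b` avoiding the non-bridge `ab` never meets `c`, so it avoids `cd`. -/
lemma reachable_deleteEdges_pair [Finite V] (hX : ∀ v, Even (X.neighborSet v).ncard)
    (hab : X.Adj a b) (hac : ¬X.Reachable a c) :
    (X.deleteEdges {s(a, b), s(c, d)}).Reachable a b := by
  classical
  obtain ⟨p, hp⟩ := reachable_deleteEdges_iff_exists_walk.1
    (not_not.1 (hab.not_isBridge_of_even_ncard_neighborSet hX))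
  refine ⟨p.transfer _ fun e he => ?_⟩
  rw [edgeSet_deleteEdges]
  refine ⟨p.edges_subset_edgeSet he, ?_⟩
  rintro (rfl | rfl)
  exacts [hp he, hac ⟨p.takeUntil c (p.fst_mem_support_of_mem_edges he)⟩]

lemma deleteEdges_le_switch (hbc : ¬X.Adj b c) (hda : ¬X.Adj d a) :
    X.deleteEdges {s(a, b), s(c, d)} ≤ X.switch a b c d := by
  intro x y hxy
  rw [deleteEdges_adj] at hxy
  rw [switch, fromEdgeSet_adj, Set.mem_symmDiff]
  refine ⟨.inl ⟨hxy.1, ?_⟩, hxy.1.ne⟩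
  simp only [Set.mem_insert_iff, Set.mem_singleton_iff] at hxy ⊢
  rintro (h | h | h | h)
  · exact hxy.2 (.inl h)
  · exact hbc (by rw [← mem_edgeSet, ← h]; exact hxy.1)
  · exact hxy.2 (.inr h)
  · exact hda (by rw [← mem_edgeSet, ← h]; exact hxy.1)

lemma Reachable.switch [Finite V] (hX : ∀ v, Even (X.neighborSet v).ncard) (hab : X.Adj a b)
    (hcd : X.Adj c d) (hac : ¬X.Reachable a c) {u w : V} (h : X.Reachable u w) :
    (X.switch a b c d).Reachable u w := by
  have hbc : ¬X.Adj b c := fun h => hac (hab.reachable.trans h.reachable)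
  have hda : ¬X.Adj d a := fun h => hac (hcd.reachable.trans h.reachable).symm
  refine (h.of_forall_adj fun x y hxy => ?_).mono (deleteEdges_le_switch hbc hda)
  by_cases hD : s(x, y) ∈ ({s(a, b), s(c, d)} : Set (Sym2 V))
  · have hcd' : (X.deleteEdges {s(a, b), s(c, d)}).Reachable c d := by
      rw [Set.pair_comm]
      exact reachable_deleteEdges_pair hX hcd fun h => hac h.symm
    simp only [Set.mem_insert_iff, Set.mem_singleton_iff, Sym2.eq_iff] at hD
    rcases hD with (⟨rfl, rfl⟩ | ⟨rfl, rfl⟩) | (⟨rfl, rfl⟩ | ⟨rfl, rfl⟩)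
    exacts [reachable_deleteEdges_pair hX hab hac, (reachable_deleteEdges_pair hX hab hac).symm,
      hcd', hcd'.symm]
  · exact (deleteEdges_adj.2 ⟨hxy, hD⟩).reachable

lemma switch_reachable [Finite V] (hX : ∀ v, Even (X.neighborSet v).ncard) (hab : X.Adj a b)
    (hcd : X.Adj c d) (hac : ¬X.Reachable a c) : (X.switch a b c d).Reachable a c := by
  have hda : (X.switch a b c d).Adj d a := by
    rw [switch, fromEdgeSet_adj, Set.mem_symmDiff]
    refine ⟨.inr ⟨by simp, fun h => hac (hcd.reachable.trans (Adj.reachable h)).symm⟩, ?_⟩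
    rintro rfl
    exact hac hcd.reachable.symm
  exact hda.symm.reachable.trans (hcd.reachable.switch hX hab hcd hac).symm

end SimpleGraph

section Gluing

variable {V ι : Type*} {C : SimpleGraph V} {E : ι → Set (Sym2 V)}

variable (C E) in
def gluing (S : Finset ι) : SimpleGraph V :=
  fromEdgeSet (symmDiff C.edgeSet (⋃ i ∈ S, E i))

lemma gluing_empty : gluing C E ∅ = C := by
  simp [gluing, symmDiff_def]

lemma gluing_insert [DecidableEq ι] {S : Finset ι} {i : ι} {a b c d : V}
    (hi : E i = {s(a, b), s(b, c), s(c, d), s(d, a)}) (hdisj : ∀ j ∈ S, Disjoint (E i) (E j)) :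
    gluing C E (insert i S) = (gluing C E S).switch a b c d := by
  have hU : ⋃ j ∈ insert i S, E j = symmDiff (E i) (⋃ j ∈ S, E j) := by
    rw [Finset.set_biUnion_insert, Disjoint.symmDiff_eq_sup (Set.disjoint_iUnion₂_right.2 hdisj)]
    rfl
  ext x y
  simp only [gluing, switch, ← hi, hU, fromEdgeSet_adj, edgeSet_fromEdgeSet, Set.mem_symmDiff,
    Set.mem_sdiff, Sym2.mem_diagSet, Sym2.mk_isDiag_iff]
  tauto

lemma gluing_adj {S : Finset ι} {x y : V} (h : C.Adj x y) (hS : ∀ j ∈ S, s(x, y) ∉ E j) :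
    (gluing C E S).Adj x y := by
  simp only [gluing, fromEdgeSet_adj, Set.mem_symmDiff, mem_edgeSet, Set.mem_iUnion]
  exact ⟨.inl ⟨h, fun ⟨j, hj, he⟩ => hS j hj he⟩, h.ne⟩

lemma reflTransGen_joinedBy_of_reachable_gluing {a b c d : ι → V}
    (hE : ∀ i, E i = {s(a i, b i), s(b i, c i), s(c i, d i), s(d i, a i)})
    (hab : ∀ i, C.Adj (a i) (b i)) (hcd : ∀ i, C.Adj (c i) (d i)) {S : Finset ι} {u w : V}
    (h : (gluing C E S).Reachable u w) :
    ReflTransGen (JoinedBy (C.connectedComponentMk ∘ a) (C.connectedComponentMk ∘ c) S)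
      (C.connectedComponentMk u) (C.connectedComponentMk w) := by
  rw [reachable_iff_reflTransGen] at h
  refine ReflTransGen.lift' _ (fun x y hxy => ?_) _ _ h
  simp only [gluing, fromEdgeSet_adj, Set.mem_symmDiff, mem_edgeSet, Set.mem_iUnion] at hxy
  obtain ⟨⟨hC, -⟩ | ⟨⟨j, hj, hxyj⟩, -⟩, -⟩ := hxy
  · rw [Function.onFun, ConnectedComponent.sound hC.reachable]
  · have hb : C.connectedComponentMk (b j) = C.connectedComponentMk (a j) :=
      (ConnectedComponent.sound (hab j).reachable).symm
    have hd : C.connectedComponentMk (d j) = C.connectedComponentMk (c j) :=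
      (ConnectedComponent.sound (hcd j).reachable).symm
    have hac : JoinedBy (C.connectedComponentMk ∘ a) (C.connectedComponentMk ∘ c) S
        (C.connectedComponentMk (a j)) (C.connectedComponentMk (c j)) := ⟨j, hj, .inl ⟨rfl, rfl⟩⟩
    rw [hE j] at hxyj
    simp only [Set.mem_insert_iff, Set.mem_singleton_iff, Sym2.eq_iff] at hxyj
    rcases hxyj with (⟨rfl, rfl⟩ | ⟨rfl, rfl⟩) | (⟨rfl, rfl⟩ | ⟨rfl, rfl⟩) |
      (⟨rfl, rfl⟩ | ⟨rfl, rfl⟩) | (⟨rfl, rfl⟩ | ⟨rfl, rfl⟩) <;>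
    simp only [Function.onFun, hb, hd] <;>
    first | rfl | exact .single hac | exact .single (Std.Symm.symm _ _ hac)

lemma reachable_of_reflTransGen_joinedBy {Y : SimpleGraph V} {a c : ι → V} {T : Set ι}
    (hCY : ∀ x y, C.Reachable x y → Y.Reachable x y) (hT : ∀ j ∈ T, Y.Reachable (a j) (c j))
    {u w : V}
    (h : ReflTransGen (JoinedBy (C.connectedComponentMk ∘ a) (C.connectedComponentMk ∘ c) T)
      (C.connectedComponentMk u) (C.connectedComponentMk w)) : Y.Reachable u w := by
  suffices ∀ K, ReflTransGen (JoinedBy (C.connectedComponentMk ∘ a) (C.connectedComponentMk ∘ c) T)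
      (C.connectedComponentMk u) K → ∀ y, C.connectedComponentMk y = K → Y.Reachable u y from
    this _ h w rfl
  intro K hK
  induction hK with
  | refl => exact fun y hy => hCY _ _ (ConnectedComponent.exact hy.symm)
  | tail _ hstep ih =>
    obtain ⟨j, hj, ⟨ha, hc⟩ | ⟨ha, hc⟩⟩ := hstep <;> intro y hy
    · exact (ih _ ha).trans ((hT j hj).trans
        (hCY _ _ (ConnectedComponent.exact (hc.trans hy.symm))))
    · exact (ih _ hc).trans ((hT j hj).symm.trans
        (hCY _ _ (ConnectedComponent.exact (ha.trans hy.symm))))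

theorem ncard_neighborSet_gluing_and_reachable [Finite V] [Finite ι] {a b c d : ι → V}
    (hC : ∀ v, Even (C.neighborSet v).ncard)
    (hE : ∀ i, E i = {s(a i, b i), s(b i, c i), s(c i, d i), s(d i, a i)})
    (hdisj : ∀ i j, i ≠ j → Disjoint (E i) (E j))
    (hab : ∀ i, C.Adj (a i) (b i)) (hcd : ∀ i, C.Adj (c i) (d i))
    (hcount : Nat.card ι + 1 = Nat.card C.ConnectedComponent)
    (hconn : ∀ K K', ReflTransGen
      (JoinedBy (C.connectedComponentMk ∘ a) (C.connectedComponentMk ∘ c) Set.univ) K K')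
    (S : Finset ι) :
    (∀ v, ((gluing C E S).neighborSet v).ncard = (C.neighborSet v).ncard) ∧
    ∀ u w, ReflTransGen (JoinedBy (C.connectedComponentMk ∘ a) (C.connectedComponentMk ∘ c) S)
      (C.connectedComponentMk u) (C.connectedComponentMk w) → (gluing C E S).Reachable u w := by
  classical
  induction S using Finset.induction_on with
  | empty =>
    rw [gluing_empty]
    exact ⟨fun _ => rfl, fun u w => reachable_of_reflTransGen_joinedBy (fun _ _ => id) (by simp)⟩
  | insert i S hi ih =>
    obtain ⟨hdeg, hreach⟩ := ih
    have hdisjS : ∀ j ∈ S, Disjoint (E i) (E j) :=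
      fun j hj => hdisj i j fun hij => hi (hij ▸ hj)
    have hX : ∀ v, Even ((gluing C E S).neighborSet v).ncard := fun v => hdeg v ▸ hC v
    have hXab : (gluing C E S).Adj (a i) (b i) := gluing_adj (hab i) fun j hj h =>
      Set.disjoint_left.1 (hdisjS j hj) (by rw [hE i]; simp) h
    have hXcd : (gluing C E S).Adj (c i) (d i) := gluing_adj (hcd i) fun j hj h =>
      Set.disjoint_left.1 (hdisjS j hj) (by rw [hE i]; simp) h
    have hsep : ¬(gluing C E S).Reachable (a i) (c i) := fun h =>
      not_reflTransGen_joinedBy_of_notMem hcount hconn (Finset.mem_coe.not.2 hi)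
        (reflTransGen_joinedBy_of_reachable_gluing hE hab hcd h)
    rw [gluing_insert (hE i) hdisjS]
    refine ⟨fun v => ?_, fun u w => reachable_of_reflTransGen_joinedBy
      (fun x y hxy => (hreach x y (by rw [ConnectedComponent.sound hxy])).switch hX hXab hXcd hsep)
      fun j hj => ?_⟩
    · rw [ncard_neighborSet_switch hXab hXcd (fun h => hsep (hXab.reachable.trans h.reachable))
        (fun h => hsep (hXcd.reachable.trans h.reachable).symm)
        (by rintro h; exact hsep (h ▸ hXab.reachable))
        (by rintro h; exact hsep (h ▸ hXcd.reachable).symm), hdeg]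
    · rcases Finset.mem_insert.1 hj with rfl | hj
      · exact switch_reachable hX hXab hXcd hsep
      · exact (hreach _ _ (.single ⟨j, hj, .inl ⟨rfl, rfl⟩⟩)).switch hX hXab hXcd hsep

end Gluing

theorem glue_cycle_factor_hamilton_general {V : Type*} [Fintype V] (G C : SimpleGraph V)
    (hCG : C ≤ G) (hC2 : ∀ v : V, Set.ncard {w | C.Adj v w} = 2)
    {ι : Type*} [Fintype ι] (a b c d : ι → V)
    (hGcyc : ∀ i, G.Adj (a i) (b i) ∧ G.Adj (b i) (c i) ∧
      G.Adj (c i) (d i) ∧ G.Adj (d i) (a i))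
    (E : ι → Set (Sym2 V))
    (hE : ∀ i, E i = {s(a i, b i), s(b i, c i), s(c i, d i), s(d i, a i)})
    -- (1) pairwise edge-disjointness:
    (hdisj : ∀ i j, i ≠ j → Disjoint (E i) (E j))
    -- (2) sharing exactly one edge with each of two distinct cycles of `C`:
    (hshare : ∀ i, C.Adj (a i) (b i) ∧ C.Adj (c i) (d i) ∧
      ¬ C.Adj (b i) (c i) ∧ ¬ C.Adj (d i) (a i) ∧
      C.connectedComponentMk (a i) ≠ C.connectedComponentMk (c i))
    -- (3) the auxiliary multigraph is a spanning tree: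
    (hcount : Nat.card ι + 1 = Nat.card C.ConnectedComponent)
    (hconn : ∀ K K' : C.ConnectedComponent, Relation.ReflTransGen
      (fun K1 K2 => ∃ i, (C.connectedComponentMk (a i) = K1 ∧
          C.connectedComponentMk (c i) = K2) ∨
        (C.connectedComponentMk (a i) = K2 ∧ C.connectedComponentMk (c i) = K1)) K K') :
    SimpleGraph.fromEdgeSet (symmDiff C.edgeSet (⋃ i, E i)) ≤ G ∧
    (SimpleGraph.fromEdgeSet (symmDiff C.edgeSet (⋃ i, E i))).Connected ∧
    ∀ v : V, Set.ncard
      {w | (SimpleGraph.fromEdgeSet (symmDiff C.edgeSet (⋃ i, E i))).Adj v w} = 2 := by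
  have hconn' : ∀ K K', ReflTransGen
      (JoinedBy (C.connectedComponentMk ∘ a) (C.connectedComponentMk ∘ c) Set.univ) K K' :=
    fun K K' => ReflTransGen.mono (fun _ _ ⟨i, hi⟩ => ⟨i, Set.mem_univ i, hi⟩) _ _ (hconn K K')
  obtain ⟨hdeg, hreach⟩ := ncard_neighborSet_gluing_and_reachable
    (fun v => (hC2 v).symm ▸ even_two) hE hdisj (fun i => (hshare i).1) (fun i => (hshare i).2.1)
    hcount hconn' Finset.univ
  have hglue : gluing C E Finset.univ = fromEdgeSet (symmDiff C.edgeSet (⋃ i, E i)) := by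
    simp [gluing]
  have hEG : ∀ i, E i ⊆ G.edgeSet := fun i => by
    obtain ⟨h1, h2, h3, h4⟩ := hGcyc i
    simp [hE i, Set.insert_subset_iff, h1, h2, h3, h4]
  have hle : C.edgeSet ∪ ⋃ i, E i ⊆ G.edgeSet :=
    Set.union_subset (edgeSet_mono hCG) (Set.iUnion_subset hEG)
  obtain ⟨K⟩ : Nonempty C.ConnectedComponent := Nat.card_pos_iff.1 (by omega) |>.1
  obtain ⟨v, -⟩ := Quot.exists_rep K
  refine ⟨(fromEdgeSet_mono (Set.symmDiff_subset_union.trans hle)).trans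
    (fromEdgeSet_edgeSet G).le, ?_, ?_⟩
  · rw [← hglue, connected_iff]
    exact ⟨fun u w => hreach u w (by simpa using hconn' _ _), ⟨v⟩⟩
  · exact fun v => hglue ▸ (hdeg v).trans (hC2 v)

/-- let `G` be a finite simple graph, `C` a cycle factor of `G` (a 2-regular
spanning subgraph), and `F` a family of 4-cycles of `G` (indexed by `ι`, the `i`-th 4-cycle
having vertices `a i, b i, c i, d i` and edge set `E i`) such that:
(1) the 4-cycles are pairwise edge-disjoint;
(2) each 4-cycle shares exactly one edge with each of exactly two distinct cycles
    (connected components) of `C` — after relabelling, the edges `a i b i` and `c i d i` lie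
    in `C`, in distinct components of `C`, while `b i c i` and `d i a i` do not lie in `C`;
(3) the multigraph on the cycles of `C` with an edge for each `i ∈ ι` joining the two
    components met by the `i`-th 4-cycle is a spanning tree (it is connected and has exactly
    one edge fewer than it has nodes).
Then the symmetric difference of the edge set of `C` with the edge sets of the 4-cycles is a
Hamilton cycle of `G`: a connected 2-regular spanning subgraph of `G`. -/
theorem glue_cycle_factor_hamilton {V : Type*} [Fintype V] (G C : SimpleGraph V)
    (hCG : C ≤ G) (hC2 : ∀ v : V, Set.ncard {w | C.Adj v w} = 2)
    {ι : Type*} [Fintype ι] (a b c d : ι → V)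
    (hquad : ∀ i, [a i, b i, c i, d i].Pairwise (· ≠ ·))
    (hGcyc : ∀ i, G.Adj (a i) (b i) ∧ G.Adj (b i) (c i) ∧
      G.Adj (c i) (d i) ∧ G.Adj (d i) (a i))
    (E : ι → Set (Sym2 V))
    (hE : ∀ i, E i = {s(a i, b i), s(b i, c i), s(c i, d i), s(d i, a i)})
    -- (1) pairwise edge-disjointness:
    (hdisj : ∀ i j, i ≠ j → Disjoint (E i) (E j))
    -- (2) sharing exactly one edge with each of two distinct cycles of `C`:
    (hshare : ∀ i, C.Adj (a i) (b i) ∧ C.Adj (c i) (d i) ∧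
      ¬ C.Adj (b i) (c i) ∧ ¬ C.Adj (d i) (a i) ∧
      C.connectedComponentMk (a i) ≠ C.connectedComponentMk (c i))
    -- (3) the auxiliary multigraph is a spanning tree:
    (hcount : Nat.card ι + 1 = Nat.card C.ConnectedComponent)
    (hconn : ∀ K K' : C.ConnectedComponent, Relation.ReflTransGen
      (fun K1 K2 => ∃ i, (C.connectedComponentMk (a i) = K1 ∧
          C.connectedComponentMk (c i) = K2) ∨
        (C.connectedComponentMk (a i) = K2 ∧ C.connectedComponentMk (c i) = K1)) K K') :
    SimpleGraph.fromEdgeSet (symmDiff C.edgeSet (⋃ i, E i)) ≤ G ∧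
    (SimpleGraph.fromEdgeSet (symmDiff C.edgeSet (⋃ i, E i))).Connected ∧
    ∀ v : V, Set.ncard
      {w | (SimpleGraph.fromEdgeSet (symmDiff C.edgeSet (⋃ i, E i))).Adj v w} = 2 :=
  glue_cycle_factor_hamilton_general G C hCG hC2 a b c d hGcyc E hE hdisj hshare hcount hconn
end
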